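/- arXiv:2101.07644 — 4 statements merged into one kernel-verified Lean document; each statement's English description precedes it below -/
import Mathlib

section
/- Let a < t, c < s, and let α, β : ℝ × ℝ → (0,∞). Define I_a^α and I_c^β as variable-order Riemann–Liouville integrals. Then for continuous f, g (assuming all integrals exist): (I_a^α(fg))(t)·(I_c^β 1)(s) + (I_a^α 1)(t)·(I_c^β(fg))(s) = I_c^β[y ↦ I_a^α[x ↦ (f(x)−f(y))(g(x)−g(y))](t)](s) + (I_a^α g)(t)·(I_c^β f)(s) + (I_a^α f)(t)·(I_c^β g)(s). -/
open MeasureTheory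

/-- The left Riemann–Liouville variable-order fractional integral
`(I_a^{α(·,·)} f)(t) = ∫_a^t (t-x)^{α(t,x)-1} f(x) / Γ(α(t,x)) dx`. -/
noncomputable def RL (α : ℝ → ℝ → ℝ) (a t : ℝ) (f : ℝ → ℝ) : ℝ :=
  ∫ x in a..t, (t - x) ^ (α t x - 1) / Real.Gamma (α t x) * f x

/-- `f` is integrable against the variable-order Riemann–Liouville kernel on `(a,t)`. -/
def RLIntegrable (α : ℝ → ℝ → ℝ) (a t : ℝ) (f : ℝ → ℝ) : Prop :=
  IntervalIntegrable (fun x => (t - x) ^ (α t x - 1) / Real.Gamma (α t x) * f x) volume a t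

theorem RL_two_parameter_product_rule
    (a t c s : ℝ) (α β : ℝ → ℝ → ℝ) (f g : ℝ → ℝ)
    (hat : a < t) (hcs : c < s)
    (hα : ∀ p q : ℝ, 0 < α p q) (hβ : ∀ p q : ℝ, 0 < β p q)
    (hf : Continuous f) (hg : Continuous g)
    (hfgα : RLIntegrable α a t (fun x => f x * g x))
    (hfgβ : RLIntegrable β c s (fun y => f y * g y))
    (hfα : RLIntegrable α a t f) (hgα : RLIntegrable α a t g)
    (hfβ : RLIntegrable β c s f) (hgβ : RLIntegrable β c s g)
    (h1α : RLIntegrable α a t (fun _ => 1)) (h1β : RLIntegrable β c s (fun _ => 1))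
    (hdα : ∀ y : ℝ, RLIntegrable α a t (fun x => (f x - f y) * (g x - g y)))
    (hdβ : RLIntegrable β c s
      (fun y => RL α a t (fun x => (f x - f y) * (g x - g y)))) :
    RL α a t (fun x => f x * g x) * RL β c s (fun _ => 1) +
        RL α a t (fun _ => 1) * RL β c s (fun y => f y * g y) =
      RL β c s (fun y => RL α a t (fun x => (f x - f y) * (g x - g y))) +
        RL α a t g * RL β c s f + RL α a t f * RL β c s g := by
  unfold RLIntegrable at *
  have inner : ∀ y : ℝ, RL α a t (fun x => (f x - f y) * (g x - g y))
      = RL α a t (fun x => f x * g x) - f y * RL α a t g - g y * RL α a t f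
        + f y * g y * RL α a t (fun _ => 1) := by
    intro y
    simp only [RL]
    rw [show (fun x => (t - x) ^ (α t x - 1) / Real.Gamma (α t x) * ((f x - f y) * (g x - g y)))
        = fun x => ((t - x) ^ (α t x - 1) / Real.Gamma (α t x) * (f x * g x)
            - f y * ((t - x) ^ (α t x - 1) / Real.Gamma (α t x) * g x)
            - g y * ((t - x) ^ (α t x - 1) / Real.Gamma (α t x) * f x))
            + f y * g y * ((t - x) ^ (α t x - 1) / Real.Gamma (α t x) * 1) from by
          funext x; ring]
    rw [intervalIntegral.integral_add ((hfgα.sub (hgα.const_mul _)).sub (hfα.const_mul _))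
        (h1α.const_mul _),
      intervalIntegral.integral_sub (hfgα.sub (hgα.const_mul _)) (hfα.const_mul _),
      intervalIntegral.integral_sub hfgα (hgα.const_mul _),
      intervalIntegral.integral_const_mul, intervalIntegral.integral_const_mul,
      intervalIntegral.integral_const_mul]
  have outer : RL β c s (fun y => RL α a t (fun x => (f x - f y) * (g x - g y)))
      = RL α a t (fun x => f x * g x) * RL β c s (fun _ => 1)
        - RL α a t g * RL β c s f - RL α a t f * RL β c s g
        + RL α a t (fun _ => 1) * RL β c s (fun y => f y * g y) := by
    conv_lhs => rw [show (fun y => RL α a t (fun x => (f x - f y) * (g x - g y)))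
        = fun y => RL α a t (fun x => f x * g x) - f y * RL α a t g - g y * RL α a t f
          + f y * g y * RL α a t (fun _ => 1) from funext inner]
    simp only [RL]
    rw [show (fun y => (s - y) ^ (β s y - 1) / Real.Gamma (β s y)
          * ((∫ x in a..t, (t - x) ^ (α t x - 1) / Real.Gamma (α t x) * (f x * g x))
            - f y * (∫ x in a..t, (t - x) ^ (α t x - 1) / Real.Gamma (α t x) * g x)
            - g y * (∫ x in a..t, (t - x) ^ (α t x - 1) / Real.Gamma (α t x) * f x)
            + f y * g y * (∫ x in a..t, (t - x) ^ (α t x - 1) / Real.Gamma (α t x) * 1)))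
        = fun y => (((∫ x in a..t, (t - x) ^ (α t x - 1) / Real.Gamma (α t x) * (f x * g x))
              * ((s - y) ^ (β s y - 1) / Real.Gamma (β s y) * 1)
            - (∫ x in a..t, (t - x) ^ (α t x - 1) / Real.Gamma (α t x) * g x)
              * ((s - y) ^ (β s y - 1) / Real.Gamma (β s y) * f y))
            - (∫ x in a..t, (t - x) ^ (α t x - 1) / Real.Gamma (α t x) * f x)
              * ((s - y) ^ (β s y - 1) / Real.Gamma (β s y) * g y))
            + (∫ x in a..t, (t - x) ^ (α t x - 1) / Real.Gamma (α t x) * 1)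
              * ((s - y) ^ (β s y - 1) / Real.Gamma (β s y) * (f y * g y)) from by
          funext y; ring]
    rw [intervalIntegral.integral_add (((h1β.const_mul _).sub (hfβ.const_mul _)).sub
        (hgβ.const_mul _)) (hfgβ.const_mul _),
      intervalIntegral.integral_sub ((h1β.const_mul _).sub (hfβ.const_mul _)) (hgβ.const_mul _),
      intervalIntegral.integral_sub (h1β.const_mul _) (hfβ.const_mul _),
      intervalIntegral.integral_const_mul, intervalIntegral.integral_const_mul,
      intervalIntegral.integral_const_mul, intervalIntegral.integral_const_mul]
  rw [outer]; ring
end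

section
/- Let a < t, c < s, and let α, β : ℝ × ℝ → (0,∞) define variable-order Riemann–Liouville integrals I_a^α, I_c^β. Then for a continuous function f (assuming integrability), the following Chebyshev-type inequality holds: (I_a^α f²)(t)·(I_c^β 1)(s) + (I_a^α 1)(t)·(I_c^β f²)(s) ≥ 2·(I_a^α f)(t)·(I_c^β f)(s). -/
open MeasureTheory

lemma RL_nonneg (α : ℝ → ℝ → ℝ) (a t : ℝ) (g : ℝ → ℝ) (hat : a ≤ t)
    (hα : ∀ p q : ℝ, 0 < α p q) (hg : ∀ x, 0 ≤ g x) : 0 ≤ RL α a t g := by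
  apply intervalIntegral.integral_nonneg hat
  intro x hx
  have h1 : (0:ℝ) ≤ (t - x) ^ (α t x - 1) := Real.rpow_nonneg (by linarith [hx.2]) _
  have h2 : 0 < Real.Gamma (α t x) := Real.Gamma_pos_of_pos (hα t x)
  exact mul_nonneg (div_nonneg h1 h2.le) (hg x)

lemma RL_expand (α : ℝ → ℝ → ℝ) (a t : ℝ) (f : ℝ → ℝ) (y : ℝ)
    (hf2α : RLIntegrable α a t (fun x => f x ^ 2))
    (hfα : RLIntegrable α a t f) (h1α : RLIntegrable α a t (fun _ => 1)) :
    RL α a t (fun x => (f x - f y) ^ 2) =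
      RL α a t (fun x => f x ^ 2) - 2 * f y * RL α a t f
        + f y ^ 2 * RL α a t (fun _ => 1) := by
  unfold RL
  set K : ℝ → ℝ := fun x => (t - x) ^ (α t x - 1) / Real.Gamma (α t x) with hK
  have key : (fun x => K x * (f x - f y) ^ 2) =
      fun x => (K x * f x ^ 2 - 2 * f y * (K x * f x)) + f y ^ 2 * (K x * 1) := by
    funext x; ring
  rw [show (fun x => K x * (f x - f y) ^ 2) = _ from key]
  rw [intervalIntegral.integral_add (hf2α.sub (hfα.const_mul (2 * f y)))
        (h1α.const_mul (f y ^ 2)),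
      intervalIntegral.integral_sub hf2α (hfα.const_mul (2 * f y)),
      intervalIntegral.integral_const_mul, intervalIntegral.integral_const_mul]

theorem RL_two_parameter_chebyshev_inequality
    (a t c s : ℝ) (α β : ℝ → ℝ → ℝ) (f : ℝ → ℝ)
    (hat : a < t) (hcs : c < s)
    (hα : ∀ p q : ℝ, 0 < α p q) (hβ : ∀ p q : ℝ, 0 < β p q)
    (hf : Continuous f)
    (hf2α : RLIntegrable α a t (fun x => f x ^ 2))
    (hf2β : RLIntegrable β c s (fun y => f y ^ 2))
    (hfα : RLIntegrable α a t f) (hfβ : RLIntegrable β c s f)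
    (h1α : RLIntegrable α a t (fun _ => 1)) (h1β : RLIntegrable β c s (fun _ => 1))
    (hdα : ∀ y : ℝ, RLIntegrable α a t (fun x => (f x - f y) ^ 2))
    (hdβ : RLIntegrable β c s (fun y => RL α a t (fun x => (f x - f y) ^ 2))) :
    2 * RL α a t f * RL β c s f ≤
      RL α a t (fun x => f x ^ 2) * RL β c s (fun _ => 1) +
        RL α a t (fun _ => 1) * RL β c s (fun y => f y ^ 2) := by
  set A := RL α a t (fun x => f x ^ 2)
  set B := RL α a t f
  set C := RL α a t (fun _ => 1)
  have hexp : ∀ y, RL α a t (fun x => (f x - f y) ^ 2) = A - 2 * f y * B + f y ^ 2 * C :=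
    fun y => RL_expand α a t f y hf2α hfα h1α
  have hpos : 0 ≤ RL β c s (fun y => RL α a t (fun x => (f x - f y) ^ 2)) := by
    apply RL_nonneg β c s _ hcs.le hβ
    intro y
    apply RL_nonneg α a t _ hat.le hα
    intro x
    positivity
  have heq : RL β c s (fun y => RL α a t (fun x => (f x - f y) ^ 2)) =
      A * RL β c s (fun _ => 1) - 2 * B * RL β c s f + C * RL β c s (fun y => f y ^ 2) := by
    have h1 : (fun y => RL α a t (fun x => (f x - f y) ^ 2)) =
        fun y => A - 2 * f y * B + f y ^ 2 * C := funext hexp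
    rw [show RL β c s (fun y => RL α a t (fun x => (f x - f y) ^ 2)) =
        RL β c s (fun y => A - 2 * f y * B + f y ^ 2 * C) from congrArg _ h1]
    unfold RL
    set K : ℝ → ℝ := fun y => (s - y) ^ (β s y - 1) / Real.Gamma (β s y) with hK
    have key : (fun y => K y * (A - 2 * f y * B + f y ^ 2 * C)) =
        fun y => (A * (K y * 1) - 2 * B * (K y * f y)) + C * (K y * f y ^ 2) := by
      funext y; ring
    rw [show (fun y => K y * (A - 2 * f y * B + f y ^ 2 * C)) = _ from key]
    rw [intervalIntegral.integral_add ((h1β.const_mul A).sub (hfβ.const_mul (2 * B)))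
          (hf2β.const_mul C),
        intervalIntegral.integral_sub (h1β.const_mul A) (hfβ.const_mul (2 * B)),
        intervalIntegral.integral_const_mul, intervalIntegral.integral_const_mul,
        intervalIntegral.integral_const_mul]
  rw [heq] at hpos
  linarith
end

section
/- Let a < t, c < s, and let α, β : ℝ × ℝ → (0,∞) define variable-order Riemann–Liouville integrals I_a^α, I_c^β. Then for continuous functions f, g (assuming all integrals exist): I_c^β[y ↦ I_a^α[x ↦ (f(x)−f(y))(g(x)−g(y))](t)](s) = (I_a^α(fg))(t)·(I_c^β 1)(s) + (I_a^α 1)(t)·(I_c^β(fg))(s) + (1/2)·[(I_a^α(f−g))(t)·(I_c^β(f−g))(s) − (I_a^α(f+g))(t)·(I_c^β(f+g))(s)]. -/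
open MeasureTheory

private lemma combo_integral {u v : ℝ} {G1 G2 G3 G4 : ℝ → ℝ} (c1 c2 c3 c4 : ℝ)
    (h1 : IntervalIntegrable G1 volume u v) (h2 : IntervalIntegrable G2 volume u v)
    (h3 : IntervalIntegrable G3 volume u v) (h4 : IntervalIntegrable G4 volume u v) :
    ∫ x in u..v, (c1 * G1 x + c2 * G2 x + (1 / 2) * (c3 * G3 x - c4 * G4 x)) =
      c1 * (∫ x in u..v, G1 x) + c2 * (∫ x in u..v, G2 x) +
        (1 / 2) * (c3 * (∫ x in u..v, G3 x) - c4 * (∫ x in u..v, G4 x)) := by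
  rw [intervalIntegral.integral_add ((h1.const_mul c1).add (h2.const_mul c2))
      (((h3.const_mul c3).sub (h4.const_mul c4)).const_mul (1 / 2)),
    intervalIntegral.integral_add (h1.const_mul c1) (h2.const_mul c2),
    intervalIntegral.integral_const_mul, intervalIntegral.integral_const_mul,
    intervalIntegral.integral_const_mul,
    intervalIntegral.integral_sub (h3.const_mul c3) (h4.const_mul c4),
    intervalIntegral.integral_const_mul, intervalIntegral.integral_const_mul]

theorem RL_two_parameter_polarization_identity
    (a t c s : ℝ) (α β : ℝ → ℝ → ℝ) (f g : ℝ → ℝ)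
    (hat : a < t) (hcs : c < s)
    (hα : ∀ p q : ℝ, 0 < α p q) (hβ : ∀ p q : ℝ, 0 < β p q)
    (hf : Continuous f) (hg : Continuous g)
    (hfgα : RLIntegrable α a t (fun x => f x * g x))
    (hfgβ : RLIntegrable β c s (fun y => f y * g y))
    (hsubα : RLIntegrable α a t (fun x => f x - g x))
    (hsubβ : RLIntegrable β c s (fun y => f y - g y))
    (haddα : RLIntegrable α a t (fun x => f x + g x))
    (haddβ : RLIntegrable β c s (fun y => f y + g y))
    (h1α : RLIntegrable α a t (fun _ => 1)) (h1β : RLIntegrable β c s (fun _ => 1))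
    (hdα : ∀ y : ℝ, RLIntegrable α a t (fun x => (f x - f y) * (g x - g y)))
    (hdβ : RLIntegrable β c s
      (fun y => RL α a t (fun x => (f x - f y) * (g x - g y)))) :
    RL β c s (fun y => RL α a t (fun x => (f x - f y) * (g x - g y))) =
      RL α a t (fun x => f x * g x) * RL β c s (fun _ => 1) +
        RL α a t (fun _ => 1) * RL β c s (fun y => f y * g y) +
        (1 / 2) *
          (RL α a t (fun x => f x - g x) * RL β c s (fun y => f y - g y) -
            RL α a t (fun x => f x + g x) * RL β c s (fun y => f y + g y)) := by
  set A := RL α a t (fun x => f x * g x) with hA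
  set B := RL α a t (fun _ => 1) with hB
  set C := RL α a t (fun x => f x - g x) with hC
  set D := RL α a t (fun x => f x + g x) with hD
  have inner : ∀ y : ℝ, RL α a t (fun x => (f x - f y) * (g x - g y)) =
      1 * A + (f y * g y) * B + (1 / 2) * ((f y - g y) * C - (f y + g y) * D) := by
    intro y
    have hcongr : RL α a t (fun x => (f x - f y) * (g x - g y)) =
        ∫ x in a..t,
          (1 * ((t - x) ^ (α t x - 1) / Real.Gamma (α t x) * (f x * g x)) +
            (f y * g y) * ((t - x) ^ (α t x - 1) / Real.Gamma (α t x) * 1) +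
            (1 / 2) * ((f y - g y) * ((t - x) ^ (α t x - 1) / Real.Gamma (α t x) * (f x - g x)) -
              (f y + g y) * ((t - x) ^ (α t x - 1) / Real.Gamma (α t x) * (f x + g x)))) := by
      unfold RL
      apply intervalIntegral.integral_congr
      intro x _
      ring
    rw [hcongr, combo_integral 1 (f y * g y) (f y - g y) (f y + g y) hfgα h1α hsubα haddα]
    rfl
  calc RL β c s (fun y => RL α a t (fun x => (f x - f y) * (g x - g y)))
      = ∫ y in c..s,
          (A * ((s - y) ^ (β s y - 1) / Real.Gamma (β s y) * 1) +
            B * ((s - y) ^ (β s y - 1) / Real.Gamma (β s y) * (f y * g y)) +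
            (1 / 2) * (C * ((s - y) ^ (β s y - 1) / Real.Gamma (β s y) * (f y - g y)) -
              D * ((s - y) ^ (β s y - 1) / Real.Gamma (β s y) * (f y + g y)))) := by
        rw [show (fun y => RL α a t (fun x => (f x - f y) * (g x - g y))) =
          fun y => 1 * A + (f y * g y) * B + (1 / 2) * ((f y - g y) * C - (f y + g y) * D)
          from funext inner]
        unfold RL
        apply intervalIntegral.integral_congr
        intro y _
        ring
    _ = _ := by
        rw [combo_integral A B C D h1β hfgβ hsubβ haddβ]
        rfl
end

section
/- Let a < t and α, β be constants in (0,∞). Then for continuous f, with classical Riemann–Liouville integrals of constant orders α and β based at a and evaluated at t: (I_a^α(f²))(t)·(t−a)^β/Γ(β+1) + (t−a)^α/Γ(α+1)·(I_a^β(f²))(t) ≥ 2·(I_a^α f)(t)·(I_a^β f)(t). -/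
open MeasureTheory

/-- The classical left Riemann–Liouville fractional integral of constant order `γ > 0`. -/
noncomputable def RLc (γ a t : ℝ) (f : ℝ → ℝ) : ℝ :=
  ∫ x in a..t, (t - x) ^ (γ - 1) * f x / Real.Gamma γ

open intervalIntegral

lemma K_integrable (a t γ : ℝ) (hγ : 0 < γ) :
    IntervalIntegrable (fun x => (t - x) ^ (γ - 1) / Real.Gamma γ) volume a t := by
  have := (intervalIntegrable_rpow' (a := t - a) (b := t - t) (r := γ - 1)
    (by linarith)).comp_sub_left t
  simp only [sub_sub_cancel] at this
  exact this.div_const _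

lemma K_integral (a t γ : ℝ) (hγ : 0 < γ) :
    ∫ x in a..t, (t - x) ^ (γ - 1) / Real.Gamma γ = (t - a) ^ γ / Real.Gamma (γ + 1) := by
  rw [intervalIntegral.integral_div]
  rw [intervalIntegral.integral_comp_sub_left (fun u : ℝ => u ^ (γ - 1)) t]
  rw [sub_self]
  rw [integral_rpow (Or.inl (by linarith))]
  rw [sub_add_cancel, Real.zero_rpow hγ.ne', Real.Gamma_add_one hγ.ne']
  field_simp
  rw [sub_zero]

lemma K_nonneg {a t γ : ℝ} (hγ : 0 < γ) {x : ℝ} (hx : x ∈ Set.Icc a t) :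
    0 ≤ (t - x) ^ (γ - 1) / Real.Gamma γ :=
  div_nonneg (Real.rpow_nonneg (by linarith [hx.2]) _) (Real.Gamma_pos_of_pos hγ).le

lemma RL_sq_nonneg (a t γ : ℝ) (f : ℝ → ℝ) (hat : a < t) (hγ : 0 < γ) :
    0 ≤ RLc γ a t (fun x => f x ^ 2) := by
  apply intervalIntegral.integral_nonneg hat.le
  intro x hx
  have := K_nonneg hγ hx
  have h := mul_nonneg this (sq_nonneg (f x))
  calc (0:ℝ) ≤ ((t - x) ^ (γ - 1) / Real.Gamma γ) * f x ^ 2 := h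
    _ = (t - x) ^ (γ - 1) * f x ^ 2 / Real.Gamma γ := by ring

lemma C_pos (a t γ : ℝ) (hat : a < t) (hγ : 0 < γ) :
    0 < (t - a) ^ γ / Real.Gamma (γ + 1) :=
  div_pos (Real.rpow_pos_of_pos (by linarith) _) (Real.Gamma_pos_of_pos (by linarith))

lemma key (a t γ : ℝ) (f : ℝ → ℝ) (hat : a < t) (hγ : 0 < γ)
    (h2 : IntervalIntegrable (fun x => (t - x) ^ (γ - 1) * f x ^ 2 / Real.Gamma γ) volume a t)
    (h1 : IntervalIntegrable (fun x => (t - x) ^ (γ - 1) * f x / Real.Gamma γ) volume a t) :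
    (RLc γ a t f) ^ 2 ≤ RLc γ a t (fun x => f x ^ 2) * ((t - a) ^ γ / Real.Gamma (γ + 1)) := by
  set C := (t - a) ^ γ / Real.Gamma (γ + 1) with hC
  have hCpos := C_pos a t γ hat hγ
  set A1 := RLc γ a t f with hA1
  set c := A1 / C with hc
  have hK := K_integrable a t γ hγ
  have hnn : 0 ≤ ∫ x in a..t,
      ((t - x) ^ (γ - 1) * f x ^ 2 / Real.Gamma γ
        - 2 * c * ((t - x) ^ (γ - 1) * f x / Real.Gamma γ)
        + c ^ 2 * ((t - x) ^ (γ - 1) / Real.Gamma γ)) := by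
    apply intervalIntegral.integral_nonneg hat.le
    intro x hx
    have hk := K_nonneg hγ hx
    have : (t - x) ^ (γ - 1) * f x ^ 2 / Real.Gamma γ
        - 2 * c * ((t - x) ^ (γ - 1) * f x / Real.Gamma γ)
        + c ^ 2 * ((t - x) ^ (γ - 1) / Real.Gamma γ)
        = ((t - x) ^ (γ - 1) / Real.Gamma γ) * (f x - c) ^ 2 := by ring
    rw [this]
    exact mul_nonneg hk (sq_nonneg _)
  rw [intervalIntegral.integral_add ((h2.sub (h1.const_mul (2 * c)))) (hK.const_mul (c ^ 2)),
      intervalIntegral.integral_sub h2 (h1.const_mul (2 * c)),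
      intervalIntegral.integral_const_mul, intervalIntegral.integral_const_mul,
      K_integral a t γ hγ, ← hC] at hnn
  have hA2 : (∫ x in a..t, (t - x) ^ (γ - 1) * f x ^ 2 / Real.Gamma γ)
      = RLc γ a t (fun x => f x ^ 2) := rfl
  rw [hA2] at hnn
  have hA1' : (∫ x in a..t, (t - x) ^ (γ - 1) * f x / Real.Gamma γ) = A1 := rfl
  rw [hA1'] at hnn
  rw [hc] at hnn
  have hCne : C ≠ 0 := hCpos.ne'
  have e : RLc γ a t (fun x => f x ^ 2) - 2 * (A1 / C) * A1 + (A1 / C) ^ 2 * C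
      = RLc γ a t (fun x => f x ^ 2) - A1 ^ 2 / C := by
    field_simp
    ring
  rw [e] at hnn
  have : A1 ^ 2 / C ≤ RLc γ a t (fun x => f x ^ 2) := by linarith
  calc A1 ^ 2 = A1 ^ 2 / C * C := by field_simp
    _ ≤ RLc γ a t (fun x => f x ^ 2) * C := by
        exact mul_le_mul_of_nonneg_right this hCpos.le

theorem RL_constant_order_chebyshev
    (a t α β : ℝ) (f : ℝ → ℝ)
    (hat : a < t) (hα : 0 < α) (hβ : 0 < β)
    (hf : Continuous f)
    (hf2α : IntervalIntegrable (fun x => (t - x) ^ (α - 1) * f x ^ 2 / Real.Gamma α) volume a t)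
    (hf2β : IntervalIntegrable (fun x => (t - x) ^ (β - 1) * f x ^ 2 / Real.Gamma β) volume a t)
    (hfα : IntervalIntegrable (fun x => (t - x) ^ (α - 1) * f x / Real.Gamma α) volume a t)
    (hfβ : IntervalIntegrable (fun x => (t - x) ^ (β - 1) * f x / Real.Gamma β) volume a t) :
    2 * RLc α a t f * RLc β a t f ≤
      RLc α a t (fun x => f x ^ 2) * ((t - a) ^ β / Real.Gamma (β + 1)) +
        (t - a) ^ α / Real.Gamma (α + 1) * RLc β a t (fun x => f x ^ 2) := by
  have hA := key a t α f hat hα hf2α hfα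
  have hB := key a t β f hat hβ hf2β hfβ
  have hCα := C_pos a t α hat hα
  have hCβ := C_pos a t β hat hβ
  have hA2 := RL_sq_nonneg a t α f hat hα
  have hB2 := RL_sq_nonneg a t β f hat hβ
  set A1 := RLc α a t f
  set B1 := RLc β a t f
  set A2 := RLc α a t (fun x => f x ^ 2)
  set B2 := RLc β a t (fun x => f x ^ 2)
  set Cα := (t - a) ^ α / Real.Gamma (α + 1)
  set Cβ := (t - a) ^ β / Real.Gamma (β + 1)
  nlinarith [sq_nonneg (A1 * Cβ - B1 * Cα), mul_pos hCα hCβ, mul_nonneg hA2 hCβ.le,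
    mul_nonneg hCα.le hB2, mul_le_mul_of_nonneg_right hA (mul_pos hCβ hCβ).le,
    mul_le_mul_of_nonneg_right hB (mul_pos hCα hCα).le, sq_nonneg (A1*Cβ + B1*Cα)]
end
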